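/- arXiv:1706.01695 — 3 statements merged into one kernel-verified Lean document; each statement's English description precedes it below -/
import Mathlib

section
/- Under hypotheses (H1)–(H5), for every saddle point p and every unstable separatrix l of p, exactly one of the following two alternatives holds: (a) there exists a saddle point σ such that cl(l) \ (l ∪ {p}) = {σ} and l is a stable separatrix of σ; (b) there exists a sink ω such that cl(l) \ (l ∪ {p}) = {ω} and l ⊆ W^s_ω. -/
open Set Filter Topology

variable {M : Type*}

/-- The set of fixed points of the flow `φ`. -/
def FixedPts [TopologicalSpace M] (φ : Flow ℝ M) : Set M :=
  {p | ∀ t : ℝ, φ t p = p}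

/-- The stable set `W^s_p` of a point `p`: points whose trajectory tends to `p` as `t → +∞`. -/
def Ws [TopologicalSpace M] (φ : Flow ℝ M) (p : M) : Set M :=
  {x | Tendsto (fun t : ℝ => φ t x) atTop (𝓝 p)}

/-- The unstable set `W^u_p` of a point `p`: points whose trajectory tends to `p` as `t → -∞`. -/
def Wu [TopologicalSpace M] (φ : Flow ℝ M) (p : M) : Set M :=
  {x | Tendsto (fun t : ℝ => φ t x) atBot (𝓝 p)}

/-- The linear model flow `t ↦ (2^(e₁ t) x, 2^(e₂ t) y)` on `ℝ²`.
`linFlow (-1) (-1)` is the model sink `a^t`, `linFlow (-1) 1` the model saddle `b^t`,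
`linFlow 1 1` the model source `c^t`. -/
noncomputable def linFlow (e₁ e₂ : ℝ) : ℝ → ℝ × ℝ → ℝ × ℝ :=
  fun t q => ((2 : ℝ) ^ (e₁ * t) * q.1, (2 : ℝ) ^ (e₂ * t) * q.2)

/-- The flow `φ` is, in a neighbourhood of `p`, topologically equivalent to the model flow `ψ`
on `ℝ²`: there is a homeomorphism from an open neighbourhood of `p` onto an open neighbourhood
of the origin, sending `p` to the origin, and mapping arcs of trajectories of `φ` onto arcs of
trajectories of `ψ` preserving the time direction (via a continuous strictly increasing
reparametrisation of time). -/
def LocallyEquivAt [TopologicalSpace M] (φ : Flow ℝ M) (p : M)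
    (ψ : ℝ → ℝ × ℝ → ℝ × ℝ) : Prop :=
  ∃ h : PartialHomeomorph M (ℝ × ℝ),
    p ∈ h.source ∧ (0 : ℝ × ℝ) ∈ h.target ∧ h p = 0 ∧
    ∀ x ∈ h.source, ∃ τ : ℝ → ℝ, Continuous τ ∧ StrictMono τ ∧ τ 0 = 0 ∧
      ∀ t : ℝ, (∀ s ∈ Set.uIcc (0 : ℝ) t, φ s x ∈ h.source) →
        h (φ t x) = ψ (τ t) (h x)

/-- `l` is an unstable separatrix of `σ`: a connected component of `W^u_σ \ {σ}`. -/
def IsUnstableSeparatrix [TopologicalSpace M] (φ : Flow ℝ M) (σ : M) (l : Set M) : Prop :=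
  ∃ x ∈ Wu φ σ \ {σ}, l = connectedComponentIn (Wu φ σ \ {σ}) x

/-- `l` is a stable separatrix of `σ`: a connected component of `W^s_σ \ {σ}`. -/
def IsStableSeparatrix [TopologicalSpace M] (φ : Flow ℝ M) (σ : M) (l : Set M) : Prop :=
  ∃ x ∈ Ws φ σ \ {σ}, l = connectedComponentIn (Ws φ σ \ {σ}) x

/-!
Take `x ∈ l` and the fixed point `q` with `x ∈ W^s_q`. A convergent non-constant trajectory is not
periodic, so `t ↦ φ t x` is injective, and the closure of the orbit adds only its two limits `p`
and `q`. A continuous injection `ℝ → ℝ` is strictly monotone and open; read through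
`W^u_p ≃ₜ ℝ`, this forbids `q = p` and makes the orbit relatively clopen in `W^u_p \ {p}`, so it
is the separatrix `l`, and `cl(l) \ (l ∪ {p}) = {q}`. The point `q` is no source, as `W^s_q`
contains `x ≠ q`; a sink gives (b), and a saddle gives (a) by the same clopen argument in
`W^s_q ≃ₜ ℝ`. Both alternatives would name the same point `q`, with different indices.
-/

open Function

section OrderedLine

variable {α δ : Type*} [ConditionallyCompleteLinearOrder α] [TopologicalSpace α] [OrderTopology α]
  [DenselyOrdered α] [LinearOrder δ] [TopologicalSpace δ] [OrderTopology δ] {g : α → δ}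

theorem Continuous.isOpen_range_of_injective [NoMinOrder α] [NoMaxOrder α] (hg : Continuous g)
    (hinj : Injective g) : IsOpen (range g) := by
  refine isOpen_iff_mem_nhds.2 ?_
  rintro _ ⟨t, rfl⟩
  obtain ⟨a, hat⟩ := exists_lt t
  obtain ⟨b, htb⟩ := exists_gt t
  have hab := (hat.trans htb).le
  rcases hg.strictMono_of_inj hinj with hmono | hanti
  · exact mem_of_superset (Ioo_mem_nhds (hmono hat) (hmono htb))
      ((intermediate_value_Ioo hab hg.continuousOn).trans (image_subset_range _ _))
  · exact mem_of_superset (Ioo_mem_nhds (hanti htb) (hanti hat))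
      ((intermediate_value_Ioo' hab hg.continuousOn).trans (image_subset_range _ _))

theorem Continuous.ne_of_tendsto_atBot_of_tendsto_atTop [Nontrivial α] (hg : Continuous g)
    (hinj : Injective g) {a b : δ} (ha : Tendsto g atBot (𝓝 a)) (hb : Tendsto g atTop (𝓝 b)) :
    a ≠ b := by
  rintro rfl
  have hconst : ∀ t, g t = a := by
    intro t
    rcases hg.strictMono_of_inj hinj with hmono | hanti
    · exact le_antisymm (hmono.monotone.ge_of_tendsto hb t) (hmono.monotone.le_of_tendsto ha t)
    · exact le_antisymm (hanti.antitone.ge_of_tendsto ha t) (hanti.antitone.le_of_tendsto hb t)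
  obtain ⟨s, t, hst⟩ := exists_pair_ne α
  exact hst (hinj ((hconst s).trans (hconst t).symm))

end OrderedLine

theorem closure_range_eq_of_tendsto {α X : Type*} [LinearOrder α] [TopologicalSpace α]
    [CompactIccSpace α] [Nonempty α] [TopologicalSpace X] [T2Space X] {γ : α → X}
    (hγ : Continuous γ) {a b : X} (ha : Tendsto γ atBot (𝓝 a)) (hb : Tendsto γ atTop (𝓝 b)) :
    closure (range γ) = insert a (insert b (range γ)) := by
  refine Subset.antisymm (fun y hy => ?_) (insert_subset
    (mem_closure_of_tendsto ha (.of_forall mem_range_self)) (insert_subset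
    (mem_closure_of_tendsto hb (.of_forall mem_range_self)) subset_closure))
  by_contra hy'
  simp only [mem_insert_iff, not_or] at hy'
  obtain ⟨hya, hyb, hyγ⟩ := hy'
  obtain ⟨U, Ua, hU, hUa, hdisja⟩ := t2_separation_nhds hya
  obtain ⟨V, Vb, hV, hVb, hdisjb⟩ := t2_separation_nhds hyb
  obtain ⟨s, hs⟩ := (ha.eventually hUa).exists_forall_of_atBot
  obtain ⟨t, ht⟩ := (hb.eventually hVb).exists_forall_of_atTop
  have hK : (γ '' Icc s t)ᶜ ∈ 𝓝 y :=
    (isCompact_Icc.image hγ).isClosed.isOpen_compl.mem_nhds fun ⟨u, _, hu⟩ => hyγ ⟨u, hu⟩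
  obtain ⟨_, ⟨⟨hzU, hzV⟩, hzK⟩, u, rfl⟩ :=
    mem_closure_iff_nhds.1 hy _ (inter_mem (inter_mem hU hV) hK)
  rcases le_or_gt u s with hus | hsu
  · exact disjoint_left.1 hdisja hzU (hs u hus)
  rcases le_or_gt t u with htu | hut
  · exact disjoint_left.1 hdisjb hzV (ht u htu)
  · exact hzK ⟨u, ⟨hsu.le, hut.le⟩, rfl⟩

theorem Function.Periodic.eq_of_tendsto_atTop {X : Type*} [TopologicalSpace X] [T2Space X]
    {f : ℝ → X} {c : ℝ} {y : X} (hf : Periodic f c) (hc : c ≠ 0) (hy : Tendsto f atTop (𝓝 y)) :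
    f 0 = y := by
  wlog hc' : 0 < c generalizing c
  · exact this hf.neg (neg_ne_zero.2 hc) (neg_pos.2 (lt_of_le_of_ne (not_lt.1 hc') hc))
  have hlim : Tendsto (fun n : ℕ => f (n * c)) atTop (𝓝 y) :=
    hy.comp (tendsto_natCast_atTop_atTop.atTop_mul_const hc')
  simp only [hf.nat_mul_eq] at hlim
  exact tendsto_nhds_unique tendsto_const_nhds hlim

theorem connectedComponentIn_eq_of_relClopen {X : Type*} [TopologicalSpace X]
    {F S U : Set X} {x : X} (hS : IsPreconnected S) (hx : x ∈ S) (hU : IsOpen U)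
    (hUF : U ∩ F = S) (hcl : closure S ∩ F ⊆ S) : connectedComponentIn F x = S := by
  have hSF : S ⊆ F := hUF ▸ inter_subset_right
  refine Subset.antisymm ?_ (hS.subset_connectedComponentIn hx hSF)
  have hCF := connectedComponentIn_subset F x
  have hcover : connectedComponentIn F x ⊆ U ∪ (closure S)ᶜ := fun y hy =>
    (em (y ∈ closure S)).imp (fun h => (hUF.ge (hcl ⟨h, hCF hy⟩)).1) id
  have hdisj : connectedComponentIn F x ∩ (U ∩ (closure S)ᶜ) = ∅ :=
    eq_empty_of_forall_notMem fun y ⟨hyC, hyU, hyS⟩ =>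
      hyS (subset_closure (hUF ▸ ⟨hyU, hCF hyC⟩))
  rcases isPreconnected_iff_subset_of_disjoint.1 isPreconnected_connectedComponentIn U _ hU
    isClosed_closure.isOpen_compl hcover hdisj with hCU | hCS
  · exact fun y hy => hUF ▸ ⟨hCU hy, hCF hy⟩
  · exact absurd (subset_closure hx) (hCS (mem_connectedComponentIn (hSF hx)))

section HomeomorphicToLine

variable {α X : Type*} [ConditionallyCompleteLinearOrder α] [TopologicalSpace α] [OrderTopology α]
  [DenselyOrdered α] [TopologicalSpace X] {W : Set X} {γ : α → X}

theorem connectedComponentIn_eq_range_of_homeomorph [NoMinOrder α] [NoMaxOrder α]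
    (e : W ≃ₜ α) {F : Set X} (hγ : Continuous γ) (hinj : Injective γ) (hFW : F ⊆ W)
    (hγF : range γ ⊆ F) (hcl : closure (range γ) ∩ F ⊆ range γ) {x : X} (hx : x ∈ range γ) :
    connectedComponentIn F x = range γ := by
  let γW : α → W := fun t => ⟨γ t, hFW (hγF (mem_range_self t))⟩
  have hγW : Continuous γW := hγ.subtype_mk _
  have hopen : IsOpen (range γW) := by
    have := (e.continuous.comp hγW).isOpen_range_of_injective
      (e.injective.comp fun s t h => hinj (congrArg Subtype.val h))
    rwa [range_comp, e.isOpen_image] at this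
  obtain ⟨U, hU, hUW⟩ := isOpen_induced_iff.1 hopen
  refine connectedComponentIn_eq_of_relClopen (isPreconnected_range hγ) hx hU ?_ hcl
  ext y
  refine ⟨fun ⟨hyU, hyF⟩ => ?_, ?_⟩
  · obtain ⟨t, ht⟩ : ⟨y, hFW hyF⟩ ∈ range γW := hUW ▸ hyU
    exact ⟨t, congrArg Subtype.val ht⟩
  · rintro ⟨t, rfl⟩
    exact ⟨show γW t ∈ Subtype.val ⁻¹' U from hUW ▸ mem_range_self t, hγF (mem_range_self t)⟩

theorem ne_of_tendsto_of_homeomorph [Nontrivial α] (e : W ≃ₜ α) (hγ : Continuous γ)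
    (hinj : Injective γ) (hγW : ∀ t, γ t ∈ W) {a b : X} (haW : a ∈ W) (ha : Tendsto γ atBot (𝓝 a))
    (hb : Tendsto γ atTop (𝓝 b)) : a ≠ b := by
  let g : α → α := fun t => e ⟨γ t, hγW t⟩
  have hg : Continuous g := e.continuous.comp (hγ.subtype_mk _)
  have hginj : Injective g := fun s t h => hinj (congrArg Subtype.val (e.injective h))
  have hlim {l : Filter α} {c : X} (hc : c ∈ W) (h : Tendsto γ l (𝓝 c)) :
      Tendsto g l (𝓝 (e ⟨c, hc⟩)) :=
    (e.continuous.tendsto _).comp (tendsto_subtype_rng.2 h)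
  rintro rfl
  exact hg.ne_of_tendsto_atBot_of_tendsto_atTop hginj (hlim haW ha) (hlim haW hb) rfl

end HomeomorphicToLine

section Flow

variable [TopologicalSpace M] (φ : Flow ℝ M) {p q x : M}

theorem isInvariant_Ws (p : M) : IsInvariant φ (Ws φ p) := fun s x hx =>
  (hx.comp (tendsto_atTop_add_const_right _ s tendsto_id)).congr fun t => φ.map_add t s x

theorem isInvariant_Wu (p : M) : IsInvariant φ (Wu φ p) := fun s x hx =>
  (hx.comp (tendsto_atBot_add_const_right _ s tendsto_id)).congr fun t => φ.map_add t s x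

theorem mem_Ws_self (hp : p ∈ FixedPts φ) : p ∈ Ws φ p :=
  tendsto_const_nhds.congr fun t => (hp t).symm

theorem mem_Wu_self (hp : p ∈ FixedPts φ) : p ∈ Wu φ p :=
  tendsto_const_nhds.congr fun t => (hp t).symm

theorem continuous_flow_apply (x : M) : Continuous fun t => φ t x :=
  φ.continuous continuous_id continuous_const

theorem notMem_orbit_of_mem_FixedPts (hp : p ∈ FixedPts φ) (hxp : x ≠ p) : p ∉ φ.orbit x :=
  fun ⟨t, ht⟩ => hxp ((φ.toHomeomorph t).injective (ht.trans (hp t).symm))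

theorem connectedComponentIn_sdiff_singleton_eq_orbit {W : Set M} (e : W ≃ₜ ℝ)
    (hW : IsInvariant φ W) (hp : p ∈ FixedPts φ) (hqW : q ∉ W) (hx : x ∈ W) (hxp : x ≠ p)
    (hinj : Injective fun t => φ t x)
    (hcl : closure (φ.orbit x) = insert p (insert q (φ.orbit x))) :
    connectedComponentIn (W \ {p}) x = φ.orbit x := by
  refine connectedComponentIn_eq_range_of_homeomorph e (continuous_flow_apply φ x)
    hinj sdiff_subset ?_ ?_ (φ.mem_orbit_self x)
  · rintro _ ⟨t, rfl⟩
    exact ⟨hW t hx, fun h => notMem_orbit_of_mem_FixedPts φ hp hxp ⟨t, h⟩⟩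
  · rintro y ⟨hy : y ∈ closure (φ.orbit x), hyW, hyp⟩
    rw [hcl] at hy
    rcases hy with rfl | rfl | hy
    exacts [absurd rfl hyp, absurd hyW hqW, hy]

theorem eq_of_mem_Ws_of_subsingleton [Subsingleton (Ws φ q)] (hq : q ∈ FixedPts φ)
    (hx : x ∈ Ws φ q) : x = q :=
  congrArg Subtype.val (Subsingleton.elim (⟨x, hx⟩ : Ws φ q) ⟨q, mem_Ws_self φ hq⟩)

variable [T2Space M]

theorem eq_of_mem_Ws (hp : p ∈ FixedPts φ) (h : p ∈ Ws φ q) : p = q :=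
  tendsto_nhds_unique (mem_Ws_self φ hp) h

theorem eq_of_mem_Wu (hp : p ∈ FixedPts φ) (h : p ∈ Wu φ q) : p = q :=
  tendsto_nhds_unique (mem_Wu_self φ hp) h

theorem injective_orbit_of_mem_Ws (hx : x ∈ Ws φ q) (hxq : x ≠ q) :
    Injective fun t => φ t x := by
  intro a b (hab : φ a x = φ b x)
  by_contra hne
  have hper : Periodic (fun t => φ t x) (b - a) := fun t => by
    dsimp only
    rw [show t + (b - a) = (t - a) + b by ring, φ.map_add, ← hab, ← φ.map_add, sub_add_cancel]
  exact hxq ((φ.map_zero_apply x).symm.trans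
    (hper.eq_of_tendsto_atTop (sub_ne_zero.2 (Ne.symm hne)) hx))

theorem closure_orbit_eq (hp : x ∈ Wu φ p) (hq : x ∈ Ws φ q) :
    closure (φ.orbit x) = insert p (insert q (φ.orbit x)) :=
  closure_range_eq_of_tendsto (continuous_flow_apply φ x) hp hq

theorem closure_orbit_sdiff_eq (hq : q ∈ FixedPts φ) (hp : x ∈ Wu φ p) (hxs : x ∈ Ws φ q)
    (hxq : x ≠ q) (hpq : p ≠ q) : closure (φ.orbit x) \ (φ.orbit x ∪ {p}) = {q} := by
  have hqx := notMem_orbit_of_mem_FixedPts φ hq hxq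
  rw [closure_orbit_eq φ hp hxs]
  ext y
  simp only [Set.mem_sdiff, mem_insert_iff, mem_union, mem_singleton_iff]
  grind

end Flow

theorem nonempty_homeomorph_real_of_eq_one {A : Type*} [TopologicalSpace A] {n : ℕ} (hn : n = 1)
    (h : Nonempty (A ≃ₜ EuclideanSpace ℝ (Fin n))) : Nonempty (A ≃ₜ ℝ) := by
  subst hn
  exact h.map fun e => e.trans (PiLp.equivOfUnique 2 ℝ _).toHomeomorph

theorem subsingleton_of_homeomorph_of_eq_zero {A : Type*} [TopologicalSpace A] {n : ℕ} (hn : n = 0)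
    (h : Nonempty (A ≃ₜ EuclideanSpace ℝ (Fin n))) : Subsingleton A := by
  subst hn
  exact h.some.injective.subsingleton

theorem unstable_separatrix_closure_alternative_general
    [TopologicalSpace M] [T2Space M]
    (φ : Flow ℝ M) (ind : M → ℕ)
    (H1s : ∀ x : M, ∃ p ∈ FixedPts φ, x ∈ Ws φ p)
    (H2 : ∀ p ∈ FixedPts φ, ind p ≤ 2 ∧
      Nonempty (↥(Wu φ p) ≃ₜ EuclideanSpace ℝ (Fin (ind p))) ∧
      Nonempty (↥(Ws φ p) ≃ₜ EuclideanSpace ℝ (Fin (2 - ind p))))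
    :
    ∀ p ∈ FixedPts φ, ind p = 1 →
      ∀ l : Set M, IsUnstableSeparatrix φ p l →
        Xor'
          (∃ σ ∈ FixedPts φ, ind σ = 1 ∧
            closure l \ (l ∪ {p}) = {σ} ∧ IsStableSeparatrix φ σ l)
          (∃ ω ∈ FixedPts φ, ind ω = 0 ∧
            closure l \ (l ∪ {p}) = {ω} ∧ l ⊆ Ws φ ω) := by
  rintro p hp hp1 l ⟨x, ⟨hxu, hxp : x ≠ p⟩, rfl⟩
  obtain ⟨q, hq, hxs⟩ := H1s x
  obtain ⟨eu⟩ := nonempty_homeomorph_real_of_eq_one hp1 (H2 p hp).2.1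
  have hxq : x ≠ q := fun h => hxp (eq_of_mem_Wu φ (h ▸ hq) hxu)
  have hinj := injective_orbit_of_mem_Ws φ hxs hxq
  have hpq : p ≠ q := ne_of_tendsto_of_homeomorph eu (continuous_flow_apply φ x) hinj
    (fun t => isInvariant_Wu φ p t hxu) (mem_Wu_self φ hp) hxu hxs
  have hcl := closure_orbit_eq φ hxu hxs
  rw [connectedComponentIn_sdiff_singleton_eq_orbit φ eu (isInvariant_Wu φ p) hp
      (fun h => hpq (eq_of_mem_Wu φ hq h).symm) hxu hxp hinj hcl,
    closure_orbit_sdiff_eq φ hq hxu hxs hxq hpq]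
  simp only [singleton_eq_singleton_iff]
  obtain ⟨hq_le, -, hWs⟩ := H2 q hq
  rcases (by omega : ind q = 0 ∨ ind q = 1 ∨ ind q = 2) with hq0 | hq1 | hq2
  · refine Or.inr ⟨⟨q, hq, hq0, rfl, fun _ ⟨t, ht⟩ => ht ▸ isInvariant_Ws φ q t hxs⟩, ?_⟩
    rintro ⟨_, -, _, rfl, -⟩
    omega
  · obtain ⟨es⟩ := nonempty_homeomorph_real_of_eq_one (by omega) hWs
    have hsep := connectedComponentIn_sdiff_singleton_eq_orbit φ es (isInvariant_Ws φ q) hq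
      (fun h => hpq (eq_of_mem_Ws φ hp h)) hxs hxq hinj (hcl.trans (insert_comm _ _ _))
    refine Or.inl ⟨⟨q, hq, hq1, rfl, x, ⟨hxs, hxq⟩, hsep.symm⟩, ?_⟩
    rintro ⟨_, -, _, rfl, -⟩
    omega
  · have := subsingleton_of_homeomorph_of_eq_zero (by omega) hWs
    exact absurd (eq_of_mem_Ws_of_subsingleton φ hq hxs) hxq

/-- Lemma (i) of `ZamykanieBezVsego`: for a saddle p and an unstable separatrix l of p,
exactly one of: (a) there is a saddle σ with cl(l) \ (l ∪ {p}) = {σ} and l a stable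
separatrix of σ; (b) there is a sink ω with cl(l) \ (l ∪ {p}) = {ω} and l ⊆ W^s_ω. -/
theorem unstable_separatrix_closure_alternative
    [TopologicalSpace M] [T2Space M] [CompactSpace M] [ConnectedSpace M]
    [ChartedSpace (EuclideanSpace ℝ (Fin 2)) M]
    (φ : Flow ℝ M) (ind : M → ℕ)
    (hfin : (FixedPts φ).Finite)
    (H1u : ∀ x : M, ∃ p ∈ FixedPts φ, x ∈ Wu φ p)
    (H1s : ∀ x : M, ∃ p ∈ FixedPts φ, x ∈ Ws φ p)
    (H2 : ∀ p ∈ FixedPts φ, ind p ≤ 2 ∧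
      Nonempty (↥(Wu φ p) ≃ₜ EuclideanSpace ℝ (Fin (ind p))) ∧
      Nonempty (↥(Ws φ p) ≃ₜ EuclideanSpace ℝ (Fin (2 - ind p))))
    (H3 : ∀ x ∉ FixedPts φ, ∃ U : Set M, IsOpen U ∧ x ∈ U ∧
      ∃ T > (0 : ℝ), ∀ t ≥ T, Disjoint ((fun y => φ t y) '' U) U)
    (H4 : ∀ p ∈ FixedPts φ,
      (ind p = 0 → LocallyEquivAt φ p (linFlow (-1) (-1))) ∧
      (ind p = 1 → LocallyEquivAt φ p (linFlow (-1) 1)) ∧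
      (ind p = 2 → LocallyEquivAt φ p (linFlow 1 1)))
    (H5 : ∃ σ ∈ FixedPts φ, ind σ = 1)
    :
    ∀ p ∈ FixedPts φ, ind p = 1 →
      ∀ l : Set M, IsUnstableSeparatrix φ p l →
        Xor'
          (∃ σ ∈ FixedPts φ, ind σ = 1 ∧
            closure l \ (l ∪ {p}) = {σ} ∧ IsStableSeparatrix φ σ l)
          (∃ ω ∈ FixedPts φ, ind ω = 0 ∧
            closure l \ (l ∪ {p}) = {ω} ∧ l ⊆ Ws φ ω) :=
  unstable_separatrix_closure_alternative_general φ ind H1s H2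
end

section
/- Let Γ be a four-colour graph without loops and without multiple edges, having n vertices and m edges. Then the graph Γ* obtained from Γ by the subdivision construction is a simple graph (no loops, no multiple edges) and has at most (2n+18)·m vertices. -/
/-- The four edge colours `s`, `t`, `u`, `c`. -/
inductive EdgeColour : Type
  | s | t | u | c
  deriving DecidableEq

/-- A four-colour graph: a finite multigraph (each edge recorded with an arbitrary orientation
of its two endpoints) whose edges are coloured with the colours `s`, `t`, `u`, `c`, such that
every vertex is incident to exactly one `s`-edge, exactly one `t`-edge and exactly one `u`-edge,
and the `c`-edges incident to a vertex `b` are linearly ordered (numbered `1, …, n_b` by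
`num b`). -/
structure FourColourGraph where
  V : Type
  E : Type
  finV : Finite V
  finE : Finite E
  ends : E → V × V
  colour : E → EdgeColour
  num : V → E → ℕ
  stu_unique : ∀ (v : V) (col : EdgeColour), col ≠ EdgeColour.c →
    ∃! e : E, (v = (ends e).1 ∨ v = (ends e).2) ∧ colour e = col
  num_bij : ∀ v : V,
    Set.BijOn (num v)
      {e : E | (v = (ends e).1 ∨ v = (ends e).2) ∧ colour e = EdgeColour.c}
      (Set.Icc 1
        (Set.ncard {e : E | (v = (ends e).1 ∨ v = (ends e).2) ∧ colour e = EdgeColour.c}))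

/-- Incidence of a vertex and an edge in a four-colour graph. -/
def FourColourGraph.Incident (G : FourColourGraph) (v : G.V) (e : G.E) : Prop :=
  v = (G.ends e).1 ∨ v = (G.ends e).2

/-- The four-colour graph `G` has no loops. -/
def NoLoops (G : FourColourGraph) : Prop :=
  ∀ e : G.E, (G.ends e).1 ≠ (G.ends e).2

/-- The four-colour graph `G` has no multiple edges: two edges with the same (unordered) pair
of endpoints coincide. -/
def NoMultipleEdges (G : FourColourGraph) : Prop :=
  ∀ e e' : G.E,
    (((G.ends e).1 = (G.ends e').1 ∧ (G.ends e).2 = (G.ends e').2) ∨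
      ((G.ends e).1 = (G.ends e').2 ∧ (G.ends e).2 = (G.ends e').1)) → e = e'

/-- The set of neighbours of a vertex in a four-colour graph. -/
def neighbourSet (G : FourColourGraph) (v : G.V) : Set G.V :=
  {w | ∃ e : G.E, G.ends e = (v, w) ∨ G.ends e = (w, v)}

/-- An isomorphism of four-colour graphs: a bijection on vertices and on edges preserving
incidence, the colours of edges and the order numbers of `c`-edges at each vertex. -/
structure FourColourIso (G G' : FourColourGraph) where
  vmap : G.V ≃ G'.V
  emap : G.E ≃ G'.E
  ends_map : ∀ e : G.E,
    G'.ends (emap e) = (vmap (G.ends e).1, vmap (G.ends e).2) ∨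
    G'.ends (emap e) = (vmap (G.ends e).2, vmap (G.ends e).1)
  colour_map : ∀ e : G.E, G'.colour (emap e) = G.colour e
  num_map : ∀ (v : G.V) (e : G.E), G.Incident v e → G.colour e = EdgeColour.c →
    G'.num (vmap v) (emap e) = G.num v e

/-- The number of internal vertices placed on an edge by the subdivision construction:
`1` for an `s`-edge, `2` for a `t`-edge, `3` for a `u`-edge, and
`(num_a(e)+5) + 3 + (num_b(e)+5)` for a `c`-edge `e = (a, b)` (the chains `c_1, …, c_{k₁}` and
`d_1, …, d_{k₂}` together with the triangle vertices `v, u, w`). -/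
def subCount (G : FourColourGraph) (e : G.E) : ℕ :=
  match G.colour e with
  | EdgeColour.s => 1
  | EdgeColour.t => 2
  | EdgeColour.u => 3
  | EdgeColour.c => (G.num (G.ends e).1 e + 5) + 3 + (G.num (G.ends e).2 e + 5)

/-- The vertex set of the subdivided graph `Γ*`: the original vertices together with the
internal vertices placed on each edge. -/
def SubVert (G : FourColourGraph) : Type :=
  G.V ⊕ Σ e : G.E, Fin (subCount G e)

/-- Adjacency between internal positions `i`, `j` on the subdivision of the edge `e`.
For a non-`c`-edge the internal vertices form a path. For a `c`-edge `e = (a, b)` with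
`k₁ = num_a(e) + 5`, positions `0, …, k₁ - 1` are the chain `c_1, …, c_{k₁}`, positions
`k₁, k₁+1, k₁+2` are the triangle `v, u, w` (with edges `v-u`, `u-w`, `v-w`), and positions
`k₁+3, …` are the chain `d_1, …, d_{k₂}`, with the extra edge `v-d_1` and no edge `w-d_1`. -/
def posAdj (G : FourColourGraph) (e : G.E) (i j : ℕ) : Prop :=
  if G.colour e = EdgeColour.c then
    ((j = i + 1 ∧ i ≠ G.num (G.ends e).1 e + 5 + 2) ∨
      (i = G.num (G.ends e).1 e + 5 ∧
        (j = G.num (G.ends e).1 e + 5 + 2 ∨ j = G.num (G.ends e).1 e + 5 + 3)))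
  else j = i + 1

/-- The adjacency relation of the subdivided graph `Γ*` (before symmetrisation): the first
endpoint of an edge is joined to internal position `0`, the second endpoint to the last
internal position, and internal positions are joined according to `posAdj`. -/
def subAdjRel (G : FourColourGraph) : SubVert G → SubVert G → Prop
  | Sum.inl v, Sum.inr ⟨e, i⟩ =>
      (v = (G.ends e).1 ∧ (i : ℕ) = 0) ∨ (v = (G.ends e).2 ∧ (i : ℕ) + 1 = subCount G e)
  | Sum.inr ⟨e, i⟩, Sum.inr ⟨e', j⟩ => e = e' ∧ posAdj G e (i : ℕ) (j : ℕ)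
  | _, _ => False

/-- The simple graph `Γ*` obtained from a four-colour graph `Γ` by the subdivision
construction. -/
def subdivisionGraph (G : FourColourGraph) : SimpleGraph (SubVert G) :=
  SimpleGraph.fromRel (subAdjRel G)

/-- The subdivided graph `Γ*` of a four-colour graph `Γ` without loops and multiple edges with
`n` vertices and `m` edges is a simple graph (irreflexive and symmetric adjacency) with at most
`(2n + 18)·m` vertices. -/
theorem subdivisionGraph_simple_and_card_le (G : FourColourGraph) (n m : ℕ)
    (h1 : NoLoops G) (h2 : NoMultipleEdges G)
    (hn : Nat.card G.V = n) (hm : Nat.card G.E = m) :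
    (∀ x : SubVert G, ¬ (subdivisionGraph G).Adj x x) ∧
    (∀ x y : SubVert G, (subdivisionGraph G).Adj x y → (subdivisionGraph G).Adj y x) ∧
    Nat.card (SubVert G) ≤ (2 * n + 18) * m := by
  classical
  haveI := G.finV; haveI := G.finE
  haveI := Fintype.ofFinite G.V
  haveI := Fintype.ofFinite G.E
  refine ⟨fun x => (subdivisionGraph G).irrefl, fun x y h => h.symm, ?_⟩
  -- bound on the number of c-edges at a vertex
  have hSn : ∀ v : G.V, Set.ncard {e : G.E |
      (v = (G.ends e).1 ∨ v = (G.ends e).2) ∧ G.colour e = EdgeColour.c} ≤ n := by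
    intro v
    have hle := Set.ncard_le_ncard_of_injOn
      (s := {e : G.E | (v = (G.ends e).1 ∨ v = (G.ends e).2) ∧ G.colour e = EdgeColour.c})
      (t := (Set.univ : Set G.V))
      (fun e => if v = (G.ends e).1 then (G.ends e).2 else (G.ends e).1)
      (fun e _ => Set.mem_univ _) ?_ Set.finite_univ
    · rwa [Set.ncard_univ, hn] at hle
    · intro e he e' he' hee
      simp only at hee
      apply h2
      rcases he.1 with h1e | h1e <;> rcases he'.1 with h1e' | h1e'
      · rw [if_pos h1e, if_pos h1e'] at hee
        exact Or.inl ⟨h1e.symm.trans h1e', hee⟩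
      · have hne : ¬ v = (G.ends e').1 := fun h => h1 e' (h ▸ h1e')
        rw [if_pos h1e, if_neg hne] at hee
        exact Or.inr ⟨h1e.symm.trans h1e', hee⟩
      · have hne : ¬ v = (G.ends e).1 := fun h => h1 e (h ▸ h1e)
        rw [if_neg hne, if_pos h1e'] at hee
        exact Or.inr ⟨hee, h1e.symm.trans h1e'⟩
      · have hne : ¬ v = (G.ends e).1 := fun h => h1 e (h ▸ h1e)
        have hne' : ¬ v = (G.ends e').1 := fun h => h1 e' (h ▸ h1e')
        rw [if_neg hne, if_neg hne'] at hee
        exact Or.inl ⟨hee, h1e.symm.trans h1e'⟩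
  have hnum : ∀ (v : G.V) (e : G.E), (v = (G.ends e).1 ∨ v = (G.ends e).2) →
      G.colour e = EdgeColour.c → G.num v e ≤ n := by
    intro v e hi hc
    have hmem := (G.num_bij v).1 (Set.mem_setOf.mpr ⟨hi, hc⟩)
    exact le_trans (Set.mem_Icc.mp hmem).2 (hSn v)
  have hsub : ∀ e : G.E, subCount G e ≤ 2 * n + 13 := by
    intro e
    show (match G.colour e with
      | EdgeColour.s => 1
      | EdgeColour.t => 2
      | EdgeColour.u => 3
      | EdgeColour.c => (G.num (G.ends e).1 e + 5) + 3 + (G.num (G.ends e).2 e + 5)) ≤ 2 * n + 13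
    rcases he : G.colour e with _ | _ | _ | _
    · show (1 : ℕ) ≤ 2 * n + 13; omega
    · show (2 : ℕ) ≤ 2 * n + 13; omega
    · show (3 : ℕ) ≤ 2 * n + 13; omega
    · have ha := hnum (G.ends e).1 e (Or.inl rfl) he
      have hb := hnum (G.ends e).2 e (Or.inr rfl) he
      show (G.num (G.ends e).1 e + 5) + 3 + (G.num (G.ends e).2 e + 5) ≤ 2 * n + 13
      omega
  -- n ≤ 2 m
  have hex : ∀ v : G.V, ∃ e : G.E,
      (v = (G.ends e).1 ∨ v = (G.ends e).2) ∧ G.colour e = EdgeColour.s :=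
    fun v => (G.stu_unique v EdgeColour.s (by decide)).exists
  choose f hf using hex
  have hn2m : n ≤ 2 * m := by
    have hfiber : ∀ e : G.E,
        (Finset.univ.filter (fun v => f v = e)).card ≤ 2 := by
      intro e
      have hsub2 : (Finset.univ.filter (fun v => f v = e)) ⊆
          {(G.ends e).1, (G.ends e).2} := by
        intro v hv
        have hfe : f v = e := (Finset.mem_filter.mp hv).2
        have := (hf v).1
        rw [hfe] at this
        rcases this with h | h
        · exact Finset.mem_insert.mpr (Or.inl h)
        · exact Finset.mem_insert.mpr (Or.inr (Finset.mem_singleton.mpr h))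
      calc (Finset.univ.filter (fun v => f v = e)).card
          ≤ ({(G.ends e).1, (G.ends e).2} : Finset G.V).card :=
            Finset.card_le_card hsub2
        _ ≤ 2 := Finset.card_insert_le _ _ |>.trans (by simp)
    have hcV : Fintype.card G.V ≤ 2 * Fintype.card G.E := by
      rw [← Finset.card_univ,
        Finset.card_eq_sum_card_fiberwise (f := f) (fun v _ => Finset.mem_univ (f v))]
      calc ∑ e ∈ Finset.univ, (Finset.univ.filter (fun v => f v = e)).card
          ≤ ∑ _e ∈ (Finset.univ : Finset G.E), 2 :=
            Finset.sum_le_sum (fun e _ => hfiber e)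
        _ = 2 * Fintype.card G.E := by
            rw [Finset.sum_const, Finset.card_univ]; ring
    rw [← hn, ← hm, Nat.card_eq_fintype_card, Nat.card_eq_fintype_card]
    exact hcV
  have hcard : Nat.card (SubVert G) = n + ∑ e : G.E, subCount G e := by
    show Nat.card (G.V ⊕ Σ e : G.E, Fin (subCount G e)) = _
    rw [Nat.card_sum, hn, Nat.card_eq_fintype_card, Fintype.card_sigma]
    simp [Fintype.card_fin]
  have hsum : ∑ e : G.E, subCount G e ≤ (2 * n + 13) * m := by
    calc ∑ e : G.E, subCount G e ≤ ∑ _e ∈ (Finset.univ : Finset G.E), (2 * n + 13) :=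
          Finset.sum_le_sum (fun e _ => hsub e)
      _ = (2 * n + 13) * m := by
          rw [Finset.sum_const, Finset.card_univ, ← Nat.card_eq_fintype_card, hm]; ring
  rw [hcard]
  calc n + ∑ e : G.E, subCount G e ≤ 2 * m + (2 * n + 13) * m := add_le_add hn2m hsum
    _ = (2 * n + 15) * m := by ring
    _ ≤ (2 * n + 18) * m := Nat.mul_le_mul_right m (by omega)
end

section
/- Every edge of a four-colour graph is contained in at most two c*-cycles. -/
/-- The number `n_b` of `c`-edges incident to the vertex `b`. -/
noncomputable def ccount (G : FourColourGraph) (b : G.V) : ℕ :=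
  Set.ncard {e : G.E | G.Incident b e ∧ G.colour e = EdgeColour.c}

/-- The order number at the vertex `b` of an edge `e` regarded as a (nominal) `c`-edge:
a genuine `c`-edge keeps its number `num b e`, the `u`-edge incident to `b` is the nominal
`c`-edge number `0`, and the `s`-edge incident to `b` is the nominal `c`-edge number
`n_b + 1`.  (The value on `t`-edges is irrelevant: they never occur in `c*`-cycles.) -/
noncomputable def cnum (G : FourColourGraph) (b : G.V) (e : G.E) : ℕ :=
  match G.colour e with
  | EdgeColour.c => G.num b e
  | EdgeColour.u => 0
  | EdgeColour.s => ccount G b + 1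
  | EdgeColour.t => 0

/-- A `c*`-cycle in a four-colour graph: a simple cycle
`b₁, (b₁,b₂), b₂, …, b₂ₖ, (b₂ₖ,b₁), b₁` of even length `2k` composed of `c`-edges and nominal
`c`-edges (so no `t`-edges), with pairwise distinct edges, such that at each vertex in an even
position of the cycle the order number of the outgoing edge is one more than that of the
incoming edge, and at each vertex in an odd position it is one less.  Here `v j = b_{j+1}` and
the edge `ε j` joins `v j` to `v (j+1)`, indices taken cyclically in `ZMod (2k)`; the vertex
`v j` sits in the paper's position `j + 1`, which is even exactly when `j.val` is odd. -/
structure CStarCycle (G : FourColourGraph) where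
  k : ℕ
  kpos : 0 < k
  v : ZMod (2 * k) → G.V
  ε : ZMod (2 * k) → G.E
  edges_inj : Function.Injective ε
  incid : ∀ j : ZMod (2 * k),
    G.ends (ε j) = (v j, v (j + 1)) ∨ G.ends (ε j) = (v (j + 1), v j)
  not_t : ∀ j : ZMod (2 * k), G.colour (ε j) ≠ EdgeColour.t
  nums : ∀ j : ZMod (2 * k),
    if Odd j.val then cnum G (v j) (ε j) = cnum G (v j) (ε (j - 1)) + 1
    else cnum G (v j) (ε (j - 1)) = cnum G (v j) (ε j) + 1

-- ===== auxiliary lemmas =====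

lemma ccount_eq (G : FourColourGraph) (v : G.V) :
    ccount G v = Set.ncard {e : G.E | (v = (G.ends e).1 ∨ v = (G.ends e).2) ∧ G.colour e = EdgeColour.c} := rfl

/-- `cnum` at a vertex is injective on incident non-`t` edges. -/
lemma cnum_inj (G : FourColourGraph) (v : G.V) {e₁ e₂ : G.E}
    (h1 : G.Incident v e₁) (h2 : G.Incident v e₂)
    (c1 : G.colour e₁ ≠ EdgeColour.t) (c2 : G.colour e₂ ≠ EdgeColour.t)
    (h : cnum G v e₁ = cnum G v e₂) : e₁ = e₂ := by
  have hbij := G.num_bij v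
  have hmem : ∀ {f : G.E}, G.Incident v f → G.colour f = EdgeColour.c →
      f ∈ {e : G.E | (v = (G.ends e).1 ∨ v = (G.ends e).2) ∧ G.colour e = EdgeColour.c} :=
    fun {f} hi hc => ⟨hi, hc⟩
  rcases hc1 : G.colour e₁ with _ | _ | _ | _ <;> rcases hc2 : G.colour e₂ with _ | _ | _ | _ <;>
    simp only [cnum, hc1, hc2] at h
  all_goals first
    | exact absurd hc1 c1
    | exact absurd hc2 c2
    | exact hbij.injOn (hmem h1 hc1) (hmem h2 hc2) h
    | (obtain ⟨w, hw, huniq⟩ := G.stu_unique v EdgeColour.s (by simp)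
       rw [huniq e₁ ⟨h1, hc1⟩, huniq e₂ ⟨h2, hc2⟩])
    | (obtain ⟨w, hw, huniq⟩ := G.stu_unique v EdgeColour.u (by simp)
       rw [huniq e₁ ⟨h1, hc1⟩, huniq e₂ ⟨h2, hc2⟩])
    | (have m1 := hbij.mapsTo (hmem h1 hc1)
       simp only [Set.mem_Icc, ← ccount_eq] at m1
       omega)
    | (have m2 := hbij.mapsTo (hmem h2 hc2)
       simp only [Set.mem_Icc, ← ccount_eq] at m2
       omega)
    | omega

lemma val_add_parity {N : ℕ} [NeZero N] (h2 : 2 ∣ N) (a b : ZMod N) :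
    (a + b).val % 2 = (a.val + b.val) % 2 := by
  rw [ZMod.val_add, Nat.mod_mod_of_dvd _ h2]

lemma val_neg_parity {N : ℕ} [NeZero N] (h2 : 2 ∣ N) (a : ZMod N) :
    (-a).val % 2 = a.val % 2 := by
  have h := val_add_parity h2 a (-a)
  rw [add_neg_cancel, ZMod.val_zero] at h
  omega

lemma val_natCast_parity {N : ℕ} (h2 : 2 ∣ N) (d : ℕ) :
    ((d : ZMod N)).val % 2 = d % 2 := by
  rw [ZMod.val_natCast, Nat.mod_mod_of_dvd _ h2]

lemma incid_left {G : FourColourGraph} (C : CStarCycle G) (j : ZMod (2 * C.k)) :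
    G.Incident (C.v j) (C.ε j) := by
  rcases C.incid j with h | h
  · left; rw [h]
  · right; rw [h]

lemma incid_right {G : FourColourGraph} (C : CStarCycle G) (j : ZMod (2 * C.k)) :
    G.Incident (C.v (j + 1)) (C.ε j) := by
  rcases C.incid j with h | h
  · right; rw [h]
  · left; rw [h]

lemma next_vertex {G : FourColourGraph} {e : G.E} {a₁ b₁ a₂ b₂ : G.V}
    (h₁ : G.ends e = (a₁, b₁) ∨ G.ends e = (b₁, a₁))
    (h₂ : G.ends e = (a₂, b₂) ∨ G.ends e = (b₂, a₂))
    (ha : a₁ = a₂) : b₁ = b₂ := by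
  subst ha
  rcases h₁ with h | h <;> rcases h₂ with h' | h' <;> rw [h] at h' <;>
    injection h' with hx hy <;>
    first | exact hy | exact hx | exact hy.trans hx | exact hx.trans hy

/-- Determinism: two `c*`-cycles that share an edge, with matching next vertex and
matching position parity, agree edge-by-edge forever. -/
lemma chase {G : FourColourGraph} (C₁ C₂ : CStarCycle G)
    (j₁ : ZMod (2 * C₁.k)) (j₂ : ZMod (2 * C₂.k))
    (he : C₁.ε j₁ = C₂.ε j₂)
    (hv : C₁.v (j₁ + 1) = C₂.v (j₂ + 1))
    (hp : j₁.val % 2 = j₂.val % 2) :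
    ∀ d : ℕ, C₁.ε (j₁ + d) = C₂.ε (j₂ + d) ∧ C₁.v (j₁ + d + 1) = C₂.v (j₂ + d + 1) := by
  haveI : NeZero (2 * C₁.k) := ⟨by have := C₁.kpos; omega⟩
  haveI : NeZero (2 * C₂.k) := ⟨by have := C₂.kpos; omega⟩
  intro d
  induction d with
  | zero => simpa using ⟨he, hv⟩
  | succ d ih =>
    obtain ⟨ihe, ihv⟩ := ih
    have hcast₁ : j₁ + ((d + 1 : ℕ) : ZMod (2 * C₁.k)) = j₁ + d + 1 := by push_cast; ring
    have hcast₂ : j₂ + ((d + 1 : ℕ) : ZMod (2 * C₂.k)) = j₂ + d + 1 := by push_cast; ring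
    rw [hcast₁, hcast₂]
    set i₁ : ZMod (2 * C₁.k) := j₁ + d + 1 with hi₁
    set i₂ : ZMod (2 * C₂.k) := j₂ + d + 1 with hi₂
    have hsub₁ : i₁ - 1 = j₁ + d := by rw [hi₁]; ring
    have hsub₂ : i₂ - 1 = j₂ + d := by rw [hi₂]; ring
    -- parities agree
    have hval₁ : i₁.val % 2 = (j₁.val + d + 1) % 2 := by
      have h1 : i₁ = j₁ + ((d + 1 : ℕ) : ZMod (2 * C₁.k)) := hcast₁.symm
      rw [h1, val_add_parity ⟨C₁.k, rfl⟩]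
      rw [Nat.add_mod, val_natCast_parity ⟨C₁.k, rfl⟩, ← Nat.add_mod]
      omega
    have hval₂ : i₂.val % 2 = (j₂.val + d + 1) % 2 := by
      have h1 : i₂ = j₂ + ((d + 1 : ℕ) : ZMod (2 * C₂.k)) := hcast₂.symm
      rw [h1, val_add_parity ⟨C₂.k, rfl⟩]
      rw [Nat.add_mod, val_natCast_parity ⟨C₂.k, rfl⟩, ← Nat.add_mod]
      omega
    have hpar : i₁.val % 2 = i₂.val % 2 := by omega
    have hodd : Odd i₁.val ↔ Odd i₂.val := by
      rw [Nat.odd_iff, Nat.odd_iff]; omega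
    -- the shared vertex
    have hw : C₁.v i₁ = C₂.v i₂ := ihv
    -- cnum relation for the outgoing edges
    have h1 := C₁.nums i₁
    have h2 := C₂.nums i₂
    rw [hsub₁] at h1
    rw [hsub₂] at h2
    have hprev : cnum G (C₁.v i₁) (C₁.ε (j₁ + d)) = cnum G (C₂.v i₂) (C₂.ε (j₂ + d)) := by
      rw [ihe, hw]
    have hcn : cnum G (C₁.v i₁) (C₁.ε i₁) = cnum G (C₂.v i₂) (C₂.ε i₂) := by
      by_cases ho : Odd i₁.val
      · rw [if_pos ho] at h1
        rw [if_pos (hodd.mp ho)] at h2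
        rw [h1, h2, hprev]
      · rw [if_neg ho] at h1
        rw [if_neg (fun hc => ho (hodd.mpr hc))] at h2
        rw [hprev] at h1
        omega
    rw [← hw] at hcn
    have hedge : C₁.ε i₁ = C₂.ε i₂ := by
      apply cnum_inj G (C₁.v i₁) (incid_left C₁ i₁) _ (C₁.not_t i₁) (C₂.not_t i₂) hcn
      rw [hw]; exact incid_left C₂ i₂
    refine ⟨hedge, ?_⟩
    have hinc₁ := C₁.incid i₁
    have hinc₂ := C₂.incid i₂
    rw [← hedge] at hinc₂
    exact next_vertex hinc₁ hinc₂ hw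

lemma chase_range {G : FourColourGraph} (C₁ C₂ : CStarCycle G)
    (j₁ : ZMod (2 * C₁.k)) (j₂ : ZMod (2 * C₂.k))
    (he : C₁.ε j₁ = C₂.ε j₂)
    (hv : C₁.v (j₁ + 1) = C₂.v (j₂ + 1))
    (hp : j₁.val % 2 = j₂.val % 2) :
    Set.range C₁.ε = Set.range C₂.ε := by
  haveI : NeZero (2 * C₁.k) := ⟨by have := C₁.kpos; omega⟩
  haveI : NeZero (2 * C₂.k) := ⟨by have := C₂.kpos; omega⟩
  apply Set.eq_of_subset_of_subset
  · rintro x ⟨i, rfl⟩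
    have hid : j₁ + ((i - j₁).val : ZMod (2 * C₁.k)) = i := by
      rw [ZMod.natCast_val, ZMod.cast_id]; ring
    refine ⟨j₂ + ((i - j₁).val : ZMod (2 * C₂.k)), ?_⟩
    rw [← (chase C₁ C₂ j₁ j₂ he hv hp ((i - j₁).val)).1, hid]
  · rintro x ⟨i, rfl⟩
    have hid : j₂ + ((i - j₂).val : ZMod (2 * C₂.k)) = i := by
      rw [ZMod.natCast_val, ZMod.cast_id]; ring
    refine ⟨j₁ + ((i - j₂).val : ZMod (2 * C₁.k)), ?_⟩
    rw [← (chase C₂ C₁ j₂ j₁ he.symm hv.symm hp.symm ((i - j₂).val)).1, hid]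

/-- The reversal of a `c*`-cycle. -/
@[reducible] def CStarCycle.reverse {G : FourColourGraph} (C : CStarCycle G) : CStarCycle G where
  k := C.k
  kpos := C.kpos
  v := fun i => C.v (1 - i)
  ε := fun i => C.ε (-i)
  edges_inj := fun a b h => by
    have := C.edges_inj h
    simpa [neg_inj] using this
  incid := fun j => by
    rcases C.incid (-j) with h | h
    · right
      rw [h]
      congr 1
      · congr 1; ring
      · congr 1; ring
    · left
      rw [h]
      congr 1
      · congr 1; ring
      · congr 1; ring
  not_t := fun j => C.not_t (-j)
  nums := fun j => by
    haveI : NeZero (2 * C.k) := ⟨by have := C.kpos; omega⟩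
    haveI : Fact (1 < 2 * C.k) := ⟨by have := C.kpos; omega⟩
    have h := C.nums (1 - j)
    have e1 : (1 : ZMod (2 * C.k)) - j - 1 = -j := by ring
    rw [e1] at h
    have e2 : -(j - 1) = 1 - j := by ring
    have hpar : (1 - j).val % 2 = (1 + j.val) % 2 := by
      have ha := val_add_parity (N := 2 * C.k) ⟨C.k, rfl⟩ 1 (-j)
      rw [ZMod.val_one] at ha
      have hb := val_neg_parity (N := 2 * C.k) ⟨C.k, rfl⟩ j
      rw [sub_eq_add_neg]
      omega
    have hoppar : Odd (1 - j).val ↔ ¬ Odd j.val := by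
      rw [Nat.odd_iff, Nat.odd_iff]; omega
    by_cases ho : Odd j.val
    · rw [if_pos ho]
      rw [if_neg (fun hc => (hoppar.mp hc) ho)] at h
      simpa [e2] using h
    · rw [if_neg ho]
      rw [if_pos (hoppar.mpr ho)] at h
      simpa [e2] using h

lemma reverse_range {G : FourColourGraph} (C : CStarCycle G) :
    Set.range C.reverse.ε = Set.range C.ε := by
  apply Set.eq_of_subset_of_subset
  · rintro x ⟨i, rfl⟩; exact ⟨-i, rfl⟩
  · rintro x ⟨i, rfl⟩
    exact ⟨-i, by show C.ε (- -i) = C.ε i; rw [neg_neg]⟩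

/-- Two `c*`-cycles containing a common edge at positions of equal parity have
the same edge set. -/
lemma same_parity_same_range {G : FourColourGraph} (C₁ C₂ : CStarCycle G)
    (j₁ : ZMod (2 * C₁.k)) (j₂ : ZMod (2 * C₂.k))
    (he : C₁.ε j₁ = C₂.ε j₂)
    (hp : j₁.val % 2 = j₂.val % 2) :
    Set.range C₁.ε = Set.range C₂.ε := by
  haveI : NeZero (2 * C₂.k) := ⟨by have := C₂.kpos; omega⟩
  by_cases hv : C₁.v (j₁ + 1) = C₂.v (j₂ + 1)
  · exact chase_range C₁ C₂ j₁ j₂ he hv hp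
  · -- use the reversal of C₂
    have he' : C₁.ε j₁ = C₂.reverse.ε (-j₂) := by
      show C₁.ε j₁ = C₂.ε (- -j₂)
      rw [neg_neg]; exact he
    have hv' : C₁.v (j₁ + 1) = C₂.reverse.v (-j₂ + 1) := by
      show C₁.v (j₁ + 1) = C₂.v (1 - (-j₂ + 1))
      have : (1 : ZMod (2 * C₂.k)) - (-j₂ + 1) = j₂ := by ring
      rw [this]
      -- C₁.v (j₁ + 1) is an endpoint of the edge distinct from C₂.v (j₂ + 1)
      have hinc₁ := C₁.incid j₁
      have hinc₂ := C₂.incid j₂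
      rw [← he] at hinc₂
      rcases hinc₁ with h | h <;> rcases hinc₂ with h' | h' <;> rw [h] at h' <;>
        injection h' with hx hy <;>
        first
          | exact absurd hy hv
          | exact absurd hx hv
          | exact hy.symm
          | exact hx.symm
          | exact absurd (hx.trans hy) hv
          | exact absurd (hy.trans hx) hv
    have hp' : j₁.val % 2 = (-j₂).val % 2 := by
      rw [val_neg_parity ⟨C₂.k, rfl⟩]; exact hp
    rw [chase_range C₁ C₂.reverse j₁ (-j₂) he' hv' hp', reverse_range]


/-- Every edge of a four-colour graph is contained in at most two `c*`-cycles (two `c*`-cycles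
being counted as equal when they consist of the same set of edges). -/
theorem edge_mem_at_most_two_cstar_cycles (G : FourColourGraph) (e : G.E) :
    Set.ncard {S : Set G.E | e ∈ S ∧ ∃ C : CStarCycle G, Set.range C.ε = S} ≤ 2 := by
  classical
  haveI : Finite G.E := G.finE
  by_contra hlt
  push_neg at hlt
  have hfin : {S : Set G.E | e ∈ S ∧ ∃ C : CStarCycle G, Set.range C.ε = S}.Finite :=
    Set.toFinite _
  rw [Set.two_lt_ncard_iff hfin] at hlt
  obtain ⟨S₁, S₂, S₃, ⟨he₁, C₁, hC₁⟩, ⟨he₂, C₂, hC₂⟩, ⟨he₃, C₃, hC₃⟩, h12, h13, h23⟩ := hlt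
  rw [← hC₁] at he₁
  rw [← hC₂] at he₂
  rw [← hC₃] at he₃
  obtain ⟨j₁, hj₁⟩ := he₁
  obtain ⟨j₂, hj₂⟩ := he₂
  obtain ⟨j₃, hj₃⟩ := he₃
  have hb₁ : j₁.val % 2 < 2 := Nat.mod_lt _ (by omega)
  have hb₂ : j₂.val % 2 < 2 := Nat.mod_lt _ (by omega)
  have hb₃ : j₃.val % 2 < 2 := Nat.mod_lt _ (by omega)
  have htri : j₁.val % 2 = j₂.val % 2 ∨ j₁.val % 2 = j₃.val % 2 ∨ j₂.val % 2 = j₃.val % 2 := by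
    omega
  rcases htri with hpp | hpp | hpp
  · exact h12 (by rw [← hC₁, ← hC₂,
      same_parity_same_range C₁ C₂ j₁ j₂ (hj₁.trans hj₂.symm) hpp])
  · exact h13 (by rw [← hC₁, ← hC₃,
      same_parity_same_range C₁ C₃ j₁ j₃ (hj₁.trans hj₃.symm) hpp])
  · exact h23 (by rw [← hC₂, ← hC₃,
      same_parity_same_range C₂ C₃ j₂ j₃ (hj₂.trans hj₃.symm) hpp])
end
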